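/- Let v be an axially symmetric smooth divergence-free vector field on Ω̄ with v_r = 0 on S₁ and v_z = 0 on S₂, and let ψ be the axially symmetric smooth solution of −Δψ + ψ/r² = ω_φ in Ω with ψ = 0 on S, where ω_φ = v_{r,z} − v_{z,r}. Then there is a constant c > 0 depending only on Ω such that: (i) |∇ψ|²_{2,Ω} + |ψ/r|²_{2,Ω} ≤ c(|v_r|²_{2,Ω} + |v_z|²_{2,Ω}); and (ii) if moreover ω_φ = 0 on S, then for every t, ∫₀^t(|∇ψ_{,z}|²_{2,Ω} + |(ψ/r)_{,z}|²_{2,Ω} + |ψ_{,z}|²_{2,Ω}) dt' ≤ c∫₀^t |ω_φ|²_{2,Ω} dt'. -/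

import Mathlib

/-!
Both estimates are energy identities in the meridian half-strip `(0,R) × (-a,a)` with the
weight `r dr dz`. For (i) the equation `−Δψ + ψ/r² = ω_φ` is tested against `r ψ`, for (ii)
against `−r ψ_zz`; after multiplication by `r` each integrand becomes `∂_r G + ∂_z H` with `G`
and `H` vanishing on the boundary of the strip, since `ψ = 0` on `S` and on the axis. Young's
inequality then closes (i), and closes (ii) together with `ψ_z² ≤ R² (ψ_z/r)²`. The singular
terms `ψ/r` and `ψ_z/r` are bounded because `ψ` vanishes on the axis (Hadamard's lemma).
-/

open MeasureTheory Real Set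
open scoped ENNReal

noncomputable section

/-- The half-strip `(0,R) × (-a,a)` of `(r,z)` coordinates describing the cylinder
`Ω = {x ∈ ℝ³ : x₁² + x₂² < R², |x₃| < a}`. -/
def cylStrip (R a : ℝ) : Set (ℝ × ℝ) := Ioo 0 R ×ˢ Ioo (-a) a

/-- The measure on the `(r,z)` half-strip corresponding to Lebesgue measure on the
cylinder `Ω` for axially symmetric integrands: `dμ = 2π r dr dz`. -/
def cylMeas (R a : ℝ) : Measure (ℝ × ℝ) :=
  ((volume : Measure (ℝ × ℝ)).restrict (cylStrip R a)).withDensity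
    fun q => ENNReal.ofReal (2 * π * q.1)

/-- The space-time measure corresponding to `Ω^t = Ω × (0,t)`. -/
def cylMeasT (R a t : ℝ) : Measure ((ℝ × ℝ) × ℝ) :=
  (cylMeas R a).prod (volume.restrict (Ioo 0 t))

/-- `∂_r` of a function of `(r,z,t)`. -/
def pdr (w : ℝ → ℝ → ℝ → ℝ) : ℝ → ℝ → ℝ → ℝ := fun r z t => deriv (fun s => w s z t) r
/-- `∂_z` of a function of `(r,z,t)`. -/
def pdz (w : ℝ → ℝ → ℝ → ℝ) : ℝ → ℝ → ℝ → ℝ := fun r z t => deriv (fun s => w r s t) z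
/-- `∂_t` of a function of `(r,z,t)`. -/
def pdt (w : ℝ → ℝ → ℝ → ℝ) : ℝ → ℝ → ℝ → ℝ := fun r z t => deriv (fun s => w r z s) t

/-- The spatial slice at time `t`, as a function on the `(r,z)` strip. -/
def sp (w : ℝ → ℝ → ℝ → ℝ) (t : ℝ) : ℝ × ℝ → ℝ := fun q => w q.1 q.2 t
/-- The space-time uncurrying of `w`. -/
def st (w : ℝ → ℝ → ℝ → ℝ) : (ℝ × ℝ) × ℝ → ℝ := fun q => w q.1.1 q.1.2 q.2

/-- `|w(·,t)|_{p,Ω}`. -/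
def nLp (R a : ℝ) (p : ℝ≥0∞) (w : ℝ → ℝ → ℝ → ℝ) (t : ℝ) : ℝ≥0∞ :=
  eLpNorm (sp w t) p (cylMeas R a)

/-- The energy norm `‖w‖_{V(Ω^t)} = ess sup_{t' ∈ (0,t)} |w(t')|_{2,Ω} + |∇w|_{2,Ω^t}`,
where for an axially symmetric scalar `|∇w|² = w_{,r}² + w_{,z}²`. -/
def Vnorm (R a t : ℝ) (w : ℝ → ℝ → ℝ → ℝ) : ℝ≥0∞ :=
  essSup (fun t' => nLp R a 2 w t') (volume.restrict (Ioo 0 t))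
  + eLpNorm (fun q : (ℝ × ℝ) × ℝ =>
      Real.sqrt ((pdr w q.1.1 q.1.2 q.2) ^ 2 + (pdz w q.1.1 q.1.2 q.2) ^ 2)) 2 (cylMeasT R a t)

open scoped ContDiff

theorem integral_Ioo_deriv_eq_sub {f : ℝ → ℝ} {x y : ℝ} (hxy : x ≤ y) (hf : ContDiff ℝ 1 f) :
    ∫ s in Ioo x y, deriv f s = f y - f x := by
  rw [← integral_Ioc_eq_integral_Ioo, ← intervalIntegral.integral_of_le hxy]
  exact intervalIntegral.integral_deriv_eq_sub (fun s _ => hf.differentiable one_ne_zero s)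
    ((hf.continuous_deriv le_rfl).intervalIntegrable _ _)

theorem deriv_eq_zero_of_eqOn_Ioo {f : ℝ → ℝ} {x y s : ℝ} (hs : s ∈ Ioo x y)
    (hf : EqOn f 0 (Ioo x y)) : deriv f s = 0 :=
  (Filter.eventuallyEq_of_mem (Ioo_mem_nhds hs.1 hs.2) hf).deriv_eq.trans (deriv_const s 0)

theorem integral_le_two_mul_integral_of_le_half_add {α : Type*} [MeasurableSpace α]
    {μ : Measure α} {f g h : α → ℝ} (hf : Integrable f μ) (hg : Integrable g μ)
    (hh : Integrable h μ) (hfg : ∫ x, f x ∂μ = ∫ x, g x ∂μ) (hle : ∀ x, g x ≤ f x / 2 + h x) :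
    ∫ x, f x ∂μ ≤ 2 * ∫ x, h x ∂μ := by
  have : ∫ x, g x ∂μ ≤ ∫ x, f x / 2 + h x ∂μ := integral_mono hg ((hf.div_const 2).add hh) hle
  rw [integral_add (hf.div_const 2) hh, integral_div, ← hfg] at this
  linarith

-- Partial derivatives in the meridian coordinates `(r, z)`, chosen so that
-- `derivR (sp w t) = sp (pdr w) t` holds by `rfl`.
def derivR (F : ℝ × ℝ → ℝ) : ℝ × ℝ → ℝ := fun q => deriv (fun s => F (s, q.2)) q.1
def derivZ (F : ℝ × ℝ → ℝ) : ℝ × ℝ → ℝ := fun q => deriv (fun s => F (q.1, s)) q.2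

section PartialDerivatives

variable {F : ℝ × ℝ → ℝ}

theorem hasDerivAt_derivR {r z : ℝ} (hF : DifferentiableAt ℝ F (r, z)) :
    HasDerivAt (fun s => F (s, z)) (derivR F (r, z)) r :=
  (hF.comp r (differentiableAt_id.prodMk (differentiableAt_const z))).hasDerivAt

theorem hasDerivAt_derivZ {r z : ℝ} (hF : DifferentiableAt ℝ F (r, z)) :
    HasDerivAt (fun s => F (r, s)) (derivZ F (r, z)) z :=
  (hF.comp z ((differentiableAt_const r).prodMk differentiableAt_id)).hasDerivAt

theorem derivR_eq_fderiv (hF : Differentiable ℝ F) : derivR F = fun q => fderiv ℝ F q (1, 0) := by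
  ext q
  exact ((hF q).hasFDerivAt.comp_hasDerivAt q.1
    ((hasDerivAt_id _).prodMk (hasDerivAt_const _ _))).deriv

theorem derivZ_eq_fderiv (hF : Differentiable ℝ F) : derivZ F = fun q => fderiv ℝ F q (0, 1) := by
  ext q
  exact ((hF q).hasFDerivAt.comp_hasDerivAt q.2
    ((hasDerivAt_const _ _).prodMk (hasDerivAt_id _))).deriv

theorem contDiff_derivR (hF : ContDiff ℝ ∞ F) : ContDiff ℝ ∞ (derivR F) := by
  rw [derivR_eq_fderiv (hF.differentiable (by simp))]
  exact (hF.fderiv_right le_rfl).clm_apply contDiff_const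

theorem contDiff_derivZ (hF : ContDiff ℝ ∞ F) : ContDiff ℝ ∞ (derivZ F) := by
  rw [derivZ_eq_fderiv (hF.differentiable (by simp))]
  exact (hF.fderiv_right le_rfl).clm_apply contDiff_const

theorem derivZ_derivR (hF : ContDiff ℝ 2 F) (q : ℝ × ℝ) :
    derivZ (derivR F) q = derivR (derivZ F) q := by
  have hF' : Differentiable ℝ F := hF.differentiable (by simp)
  have hdF : Differentiable ℝ (fderiv ℝ F) :=
    (hF.fderiv_right (m := 1) (by norm_num)).differentiable one_ne_zero
  have happly (v : ℝ × ℝ) : Differentiable ℝ fun p => fderiv ℝ F p v :=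
    fun p => (hdF p).clm_apply (differentiableAt_const v)
  rw [derivR_eq_fderiv hF', derivZ_eq_fderiv hF', derivZ_eq_fderiv (happly _),
    derivR_eq_fderiv (happly _)]
  simp only [fderiv_clm_apply (hdF _) (differentiableAt_const _), fderiv_fun_const, Pi.zero_apply,
    ContinuousLinearMap.comp_zero, zero_add, ContinuousLinearMap.flip_apply]
  exact hF.contDiffAt.isSymmSndFDerivAt (by simp) _ _

theorem continuous_derivR (hF : ContDiff ℝ 1 F) : Continuous (derivR F) := by
  rw [derivR_eq_fderiv (hF.differentiable one_ne_zero)]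
  exact (hF.continuous_fderiv one_ne_zero).clm_apply continuous_const

theorem exists_continuous_eq_div_fst (hF : ContDiff ℝ 1 F) (h0 : ∀ z, F (0, z) = 0) :
    ∃ φ : ℝ × ℝ → ℝ, Continuous φ ∧ ∀ q : ℝ × ℝ, q.1 ≠ 0 → F q / q.1 = φ q := by
  refine ⟨fun q => ∫ s in (0 : ℝ)..1, derivR F (s * q.1, q.2), ?_, fun ⟨r, z⟩ hr => ?_⟩
  · have := continuous_derivR hF
    exact intervalIntegral.continuous_parametric_intervalIntegral_of_continuous' (by fun_prop) 0 1
  · have hderiv (s : ℝ) : HasDerivAt (fun s => F (s * r, z) / r) (derivR F (s * r, z)) s := by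
      have := ((hasDerivAt_derivR (z := z) (hF.differentiable one_ne_zero (s * r, z))).comp s
        (hasDerivAt_mul_const r)).div_const r
      rwa [mul_div_cancel_right₀ _ hr] at this
    show F (r, z) / r = ∫ s in (0 : ℝ)..1, derivR F (s * r, z)
    rw [intervalIntegral.integral_eq_sub_of_hasDerivAt (fun s _ => hderiv s)
      (((continuous_derivR hF).comp (by fun_prop)).intervalIntegrable _ _)]
    simp [h0]

end PartialDerivatives

section Cylinder

variable {R a : ℝ}

theorem measurableSet_cylStrip : MeasurableSet (cylStrip R a) :=
  measurableSet_Ioo.prod measurableSet_Ioo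

theorem cylStrip_subset_Icc : cylStrip R a ⊆ Icc 0 R ×ˢ Icc (-a) a :=
  prod_mono Ioo_subset_Icc_self Ioo_subset_Icc_self

theorem Continuous.integrableOn_cylStrip {f : ℝ × ℝ → ℝ} (hf : Continuous f) :
    IntegrableOn f (cylStrip R a) :=
  (hf.continuousOn.integrableOn_compact (isCompact_Icc.prod isCompact_Icc)).mono_set
    cylStrip_subset_Icc

theorem volume_restrict_cylStrip : volume.restrict (cylStrip R a) =
    (volume.restrict (Ioo 0 R)).prod (volume.restrict (Ioo (-a) a)) := by
  rw [cylStrip, Measure.prod_restrict, ← Measure.volume_eq_prod]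

theorem cylMeas_eq_withDensity_toNNReal : cylMeas R a =
    (volume.restrict (cylStrip R a)).withDensity fun q => ((2 * π * q.1).toNNReal : ℝ≥0∞) :=
  rfl

theorem ae_cylMeas_mem : ∀ᵐ q ∂cylMeas R a, q ∈ cylStrip R a :=
  (withDensity_absolutelyContinuous _ _).ae_le (ae_restrict_mem measurableSet_cylStrip)

instance : IsFiniteMeasure (cylMeas R a) :=
  isFiniteMeasure_withDensity_ofReal
    (continuous_const.mul continuous_fst).integrableOn_cylStrip.hasFiniteIntegral

theorem integral_cylMeas (f : ℝ × ℝ → ℝ) :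
    ∫ q, f q ∂cylMeas R a = 2 * π * ∫ q in cylStrip R a, q.1 * f q := by
  rw [cylMeas_eq_withDensity_toNNReal, integral_withDensity_eq_integral_smul (by fun_prop),
    ← integral_const_mul]
  refine setIntegral_congr_fun measurableSet_cylStrip fun q hq => ?_
  rw [NNReal.smul_def, smul_eq_mul, Real.coe_toNNReal _ (by have := hq.1.1; positivity)]
  ring

theorem integrable_cylMeas_iff {f : ℝ × ℝ → ℝ} :
    Integrable f (cylMeas R a) ↔ IntegrableOn (fun q => q.1 * f q) (cylStrip R a) := by
  rw [cylMeas_eq_withDensity_toNNReal, integrable_withDensity_iff_integrable_smul (by fun_prop),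
    IntegrableOn]
  refine (integrable_congr ?_).trans
    (integrable_const_mul_iff (isUnit_iff_ne_zero.2 (by positivity : (2 * π : ℝ) ≠ 0)) _)
  filter_upwards [ae_restrict_mem measurableSet_cylStrip] with q hq
  rw [NNReal.smul_def, smul_eq_mul, Real.coe_toNNReal _ (by have := hq.1.1; positivity)]
  ring

theorem integrable_cylMeas_of_eqOn {f g : ℝ × ℝ → ℝ} (hg : Continuous g)
    (hfg : EqOn f g (cylStrip R a)) : Integrable f (cylMeas R a) := by
  refine (integrable_cylMeas_iff.2 (continuous_fst.mul hg).integrableOn_cylStrip).congr ?_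
  filter_upwards [ae_cylMeas_mem] with q hq using (hfg hq).symm

theorem Continuous.integrable_cylMeas {f : ℝ × ℝ → ℝ} (hf : Continuous f) :
    Integrable f (cylMeas R a) :=
  integrable_cylMeas_of_eqOn hf fun _ _ => rfl

theorem continuous_integral_cylMeas {f : ℝ → ℝ × ℝ → ℝ} (hf : Continuous (Function.uncurry f)) :
    Continuous fun t => ∫ q, f t q ∂cylMeas R a := by
  have hK : ∀ᵐ q ∂cylMeas R a, q ∈ Icc 0 R ×ˢ Icc (-a) a := by
    filter_upwards [ae_cylMeas_mem] with q hq using cylStrip_subset_Icc hq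
  rw [← Measure.restrict_eq_self_of_ae_mem hK]
  exact continuous_parametric_integral_of_continuous hf (isCompact_Icc.prod isCompact_Icc)

theorem integral_sq_le_sq_mul_integral_sq_div_fst {f : ℝ × ℝ → ℝ}
    (hf : Integrable (fun q => f q ^ 2) (cylMeas R a))
    (hf' : Integrable (fun q => (f q / q.1) ^ 2) (cylMeas R a)) :
    ∫ q, f q ^ 2 ∂cylMeas R a ≤ R ^ 2 * ∫ q, (f q / q.1) ^ 2 ∂cylMeas R a := by
  rw [← integral_const_mul]
  refine integral_mono_ae hf (hf'.const_mul _) ?_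
  filter_upwards [ae_cylMeas_mem] with q hq
  have hr : 0 < q.1 := hq.1.1
  calc f q ^ 2 = q.1 ^ 2 * (f q / q.1) ^ 2 := by field_simp
    _ ≤ R ^ 2 * (f q / q.1) ^ 2 := by gcongr; exact hq.1.2.le

end Cylinder

section Divergence

variable {R a : ℝ}

theorem integral_derivR_eq_zero (hR : 0 ≤ R) {G : ℝ × ℝ → ℝ}
    (hint : IntegrableOn (derivR G) (cylStrip R a))
    (hG : ∀ z ∈ Ioo (-a) a, ContDiff ℝ 1 fun r => G (r, z))
    (hbdry : ∀ z ∈ Ioo (-a) a, G (0, z) = G (R, z)) :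
    ∫ q in cylStrip R a, derivR G q = 0 := by
  rw [IntegrableOn, volume_restrict_cylStrip] at hint
  rw [volume_restrict_cylStrip, integral_prod_symm _ hint]
  refine setIntegral_eq_zero_of_forall_eq_zero fun z hz => ?_
  exact (integral_Ioo_deriv_eq_sub hR (hG z hz)).trans (sub_eq_zero.2 (hbdry z hz).symm)

theorem integral_derivZ_eq_zero (ha : 0 ≤ a) {H : ℝ × ℝ → ℝ}
    (hint : IntegrableOn (derivZ H) (cylStrip R a))
    (hH : ∀ r ∈ Ioo 0 R, ContDiff ℝ 1 fun z => H (r, z))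
    (hbdry : ∀ r ∈ Ioo 0 R, H (r, -a) = H (r, a)) :
    ∫ q in cylStrip R a, derivZ H q = 0 := by
  rw [IntegrableOn, volume_restrict_cylStrip] at hint
  rw [volume_restrict_cylStrip, integral_prod _ hint]
  refine setIntegral_eq_zero_of_forall_eq_zero fun r hr => ?_
  exact (integral_Ioo_deriv_eq_sub (by linarith) (hH r hr)).trans
    (sub_eq_zero.2 (hbdry r hr).symm)

theorem integral_cylMeas_eq_of_divergence (hR : 0 ≤ R) (ha : 0 ≤ a) {f g G H : ℝ × ℝ → ℝ}
    (hf : Integrable f (cylMeas R a)) (hg : Integrable g (cylMeas R a)) (hG : ContDiff ℝ 1 G)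
    (hH : ∀ r ∈ Ioo 0 R, ContDiff ℝ 1 fun z => H (r, z))
    (hG_bdry : ∀ z ∈ Ioo (-a) a, G (0, z) = G (R, z))
    (hH_bdry : ∀ r ∈ Ioo 0 R, H (r, -a) = H (r, a))
    (hdiv : ∀ q ∈ cylStrip R a, q.1 * (f q - g q) = derivR G q + derivZ H q) :
    ∫ q, f q ∂cylMeas R a = ∫ q, g q ∂cylMeas R a := by
  have hGi : IntegrableOn (derivR G) (cylStrip R a) := (continuous_derivR hG).integrableOn_cylStrip
  have hHi : IntegrableOn (derivZ H) (cylStrip R a) :=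
    ((integrable_cylMeas_iff.1 (hf.sub hg)).sub hGi).congr_fun
      (fun q hq => by simp [hdiv q hq]) measurableSet_cylStrip
  rw [← sub_eq_zero, ← integral_sub hf hg, integral_cylMeas,
    setIntegral_congr_fun measurableSet_cylStrip hdiv, integral_add hGi hHi,
    integral_derivR_eq_zero hR hGi (fun z _ => hG.comp (contDiff_id.prodMk contDiff_const)) hG_bdry,
    integral_derivZ_eq_zero ha hHi hH hH_bdry, add_zero, mul_zero]

end Divergence

/-- The `φ`-component of `−Δ(ψ e_φ)` for axially symmetric `ψ`. -/
def negVecLaplacianφ (Ψ : ℝ × ℝ → ℝ) : ℝ × ℝ → ℝ := fun q =>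
  -(derivR (derivR Ψ) q + derivR Ψ q / q.1 + derivZ (derivZ Ψ) q) + Ψ q / q.1 ^ 2

structure VanishesOnBoundary (R a : ℝ) (Ψ : ℝ × ℝ → ℝ) : Prop where
  axis : ∀ z, Ψ (0, z) = 0
  lateral : ∀ z ∈ Icc (-a) a, Ψ (R, z) = 0
  top : ∀ r ∈ Icc 0 R, Ψ (r, a) = 0
  bottom : ∀ r ∈ Icc 0 R, Ψ (r, -a) = 0

namespace VanishesOnBoundary

variable {R a : ℝ} {Ψ : ℝ × ℝ → ℝ}

theorem derivZ_axis (h : VanishesOnBoundary R a Ψ) (z : ℝ) : derivZ Ψ (0, z) = 0 := by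
  simp [derivZ, h.axis]

theorem derivZ_lateral (h : VanishesOnBoundary R a Ψ) {z : ℝ} (hz : z ∈ Ioo (-a) a) :
    derivZ Ψ (R, z) = 0 :=
  deriv_eq_zero_of_eqOn_Ioo hz fun t ht => h.lateral t (Ioo_subset_Icc_self ht)

theorem derivZ_derivZ_lateral (h : VanishesOnBoundary R a Ψ) {z : ℝ} (hz : z ∈ Ioo (-a) a) :
    derivZ (derivZ Ψ) (R, z) = 0 :=
  deriv_eq_zero_of_eqOn_Ioo hz fun _ ht => h.derivZ_lateral ht

theorem derivR_top (h : VanishesOnBoundary R a Ψ) {r : ℝ} (hr : r ∈ Ioo 0 R) :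
    derivR Ψ (r, a) = 0 :=
  deriv_eq_zero_of_eqOn_Ioo hr fun s hs => h.top s (Ioo_subset_Icc_self hs)

theorem derivR_bottom (h : VanishesOnBoundary R a Ψ) {r : ℝ} (hr : r ∈ Ioo 0 R) :
    derivR Ψ (r, -a) = 0 :=
  deriv_eq_zero_of_eqOn_Ioo hr fun s hs => h.bottom s (Ioo_subset_Icc_self hs)

end VanishesOnBoundary

section Energy

variable {R a : ℝ} {Ψ : ℝ × ℝ → ℝ}

theorem mul_energy_density_eq_divergence {Vr Vz : ℝ × ℝ → ℝ} (hΨ : ContDiff ℝ ∞ Ψ)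
    (hVr : ContDiff ℝ ∞ Vr) (hVz : ContDiff ℝ ∞ Vz) {r z : ℝ} (hr : r ≠ 0)
    (heq : negVecLaplacianφ Ψ (r, z) = derivZ Vr (r, z) - derivR Vz (r, z)) :
    r * (derivR Ψ (r, z) ^ 2 + derivZ Ψ (r, z) ^ 2 + (Ψ (r, z) / r) ^ 2
      - (-(Vr (r, z) * derivZ Ψ (r, z)) + Vz (r, z) * derivR Ψ (r, z)
        + Vz (r, z) * (Ψ (r, z) / r)))
    = derivR (fun q => q.1 * (derivR Ψ q - Vz q) * Ψ q) (r, z)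
      + derivZ (fun q => q.1 * (derivZ Ψ q + Vr q) * Ψ q) (r, z) := by
  have hd {F : ℝ × ℝ → ℝ} (hF : ContDiff ℝ ∞ F) (q : ℝ × ℝ) : DifferentiableAt ℝ F q :=
    hF.differentiable (by simp) q
  have hG : derivR (fun q => q.1 * (derivR Ψ q - Vz q) * Ψ q) (r, z) =
      (1 * (derivR Ψ (r, z) - Vz (r, z)) + r * (derivR (derivR Ψ) (r, z) - derivR Vz (r, z)))
        * Ψ (r, z) + r * (derivR Ψ (r, z) - Vz (r, z)) * derivR Ψ (r, z) :=
    (((hasDerivAt_id r).mul ((hasDerivAt_derivR (hd (contDiff_derivR hΨ) _)).sub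
      (hasDerivAt_derivR (hd hVz _)))).mul (hasDerivAt_derivR (hd hΨ _))).deriv
  have hH : derivZ (fun q => q.1 * (derivZ Ψ q + Vr q) * Ψ q) (r, z) =
      (0 * (derivZ Ψ (r, z) + Vr (r, z)) + r * (derivZ (derivZ Ψ) (r, z) + derivZ Vr (r, z)))
        * Ψ (r, z) + r * (derivZ Ψ (r, z) + Vr (r, z)) * derivZ Ψ (r, z) :=
    (((hasDerivAt_const z r).mul ((hasDerivAt_derivZ (hd (contDiff_derivZ hΨ) _)).add
      (hasDerivAt_derivZ (hd hVr _)))).mul (hasDerivAt_derivZ (hd hΨ _))).deriv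
  have hrr : derivR (derivR Ψ) (r, z) = Ψ (r, z) / r ^ 2 - derivR Ψ (r, z) / r
      - derivZ (derivZ Ψ) (r, z) - (derivZ Vr (r, z) - derivR Vz (r, z)) := by
    simp only [negVecLaplacianφ] at heq
    linear_combination -heq
  rw [hG, hH, hrr]
  field_simp
  ring

theorem integral_sq_grad_add_sq_div_le (hR : 0 ≤ R) (ha : 0 ≤ a) {Vr Vz : ℝ × ℝ → ℝ}
    (hΨ : ContDiff ℝ ∞ Ψ) (hVr : ContDiff ℝ ∞ Vr) (hVz : ContDiff ℝ ∞ Vz)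
    (hbc : VanishesOnBoundary R a Ψ)
    (heq : ∀ q ∈ cylStrip R a, negVecLaplacianφ Ψ q = derivZ Vr q - derivR Vz q) :
    (∫ q, derivR Ψ q ^ 2 + derivZ Ψ q ^ 2 ∂cylMeas R a) + ∫ q, (Ψ q / q.1) ^ 2 ∂cylMeas R a
      ≤ 2 * ((∫ q, Vr q ^ 2 ∂cylMeas R a) + ∫ q, Vz q ^ 2 ∂cylMeas R a) := by
  have hΨr := contDiff_derivR hΨ
  have hΨz := contDiff_derivZ hΨ
  obtain ⟨φ, hφc, hφ⟩ := exists_continuous_eq_div_fst (hΨ.of_le (by simp)) hbc.axis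
  have hφ' : EqOn (fun q => Ψ q / q.1) φ (cylStrip R a) := fun q hq => hφ q hq.1.1.ne'
  have hgrad : Integrable (fun q => derivR Ψ q ^ 2 + derivZ Ψ q ^ 2) (cylMeas R a) :=
    Continuous.integrable_cylMeas (by fun_prop)
  have hdiv : Integrable (fun q => (Ψ q / q.1) ^ 2) (cylMeas R a) :=
    integrable_cylMeas_of_eqOn (g := fun q => φ q ^ 2) (by fun_prop) fun q hq => by
      simp only [hφ' hq]
  have hA : Integrable (fun q => derivR Ψ q ^ 2 + derivZ Ψ q ^ 2 + (Ψ q / q.1) ^ 2)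
      (cylMeas R a) := hgrad.add hdiv
  have hB : Integrable
      (fun q => -(Vr q * derivZ Ψ q) + Vz q * derivR Ψ q + Vz q * (Ψ q / q.1)) (cylMeas R a) :=
    integrable_cylMeas_of_eqOn
      (g := fun q => -(Vr q * derivZ Ψ q) + Vz q * derivR Ψ q + Vz q * φ q)
      (by fun_prop) fun q hq => by simp only [hφ' hq]
  have hVr2 : Integrable (fun q => Vr q ^ 2) (cylMeas R a) :=
    Continuous.integrable_cylMeas (by fun_prop)
  have hVz2 : Integrable (fun q => Vz q ^ 2) (cylMeas R a) :=
    Continuous.integrable_cylMeas (by fun_prop)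
  have hV : Integrable (fun q => Vr q ^ 2 + Vz q ^ 2) (cylMeas R a) := hVr2.add hVz2
  have hAB := integral_cylMeas_eq_of_divergence hR ha hA hB
    (G := fun q => q.1 * (derivR Ψ q - Vz q) * Ψ q) (H := fun q => q.1 * (derivZ Ψ q + Vr q) * Ψ q)
    ((by fun_prop : ContDiff ℝ ∞ _).of_le (by simp))
    (fun r _ => (by dsimp only; fun_prop : ContDiff ℝ ∞ _).of_le (by simp))
    (fun z hz => by simp [hbc.lateral z (Ioo_subset_Icc_self hz)])
    (fun r hr => by simp [hbc.top r (Ioo_subset_Icc_self hr),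
      hbc.bottom r (Ioo_subset_Icc_self hr)])
    fun ⟨r, z⟩ hq => mul_energy_density_eq_divergence hΨ hVr hVz hq.1.1.ne' (heq _ hq)
  have hle := integral_le_two_mul_integral_of_le_half_add hA hB hV hAB fun q => by
    nlinarith [sq_nonneg (Vr q + derivZ Ψ q), sq_nonneg (Vz q - derivR Ψ q),
      sq_nonneg (Vz q - Ψ q / q.1), sq_nonneg (Vr q)]
  rwa [integral_add hgrad hdiv, integral_add hVr2 hVz2] at hle

theorem mul_energy_density_derivZ_eq_divergence {W : ℝ × ℝ → ℝ} (hΨ : ContDiff ℝ ∞ Ψ)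
    {r z : ℝ} (hr : r ≠ 0) (heq : negVecLaplacianφ Ψ (r, z) = W (r, z)) :
    r * (derivR (derivZ Ψ) (r, z) ^ 2 + derivZ (derivZ Ψ) (r, z) ^ 2 + (derivZ Ψ (r, z) / r) ^ 2
      + W (r, z) * derivZ (derivZ Ψ) (r, z))
    = derivR (fun q => -(q.1 * derivR Ψ q * derivZ (derivZ Ψ) q)) (r, z)
      + derivZ (fun q => q.1 * derivR Ψ q * derivR (derivZ Ψ) q + Ψ q * derivZ Ψ q / q.1)
        (r, z) := by
  have hd {F : ℝ × ℝ → ℝ} (hF : ContDiff ℝ ∞ F) (q : ℝ × ℝ) : DifferentiableAt ℝ F q :=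
    hF.differentiable (by simp) q
  have hΨr := contDiff_derivR hΨ
  have hΨz := contDiff_derivZ hΨ
  have hG : derivR (fun q => -(q.1 * derivR Ψ q * derivZ (derivZ Ψ) q)) (r, z) =
      -((1 * derivR Ψ (r, z) + r * derivR (derivR Ψ) (r, z)) * derivZ (derivZ Ψ) (r, z)
        + r * derivR Ψ (r, z) * derivR (derivZ (derivZ Ψ)) (r, z)) :=
    (((hasDerivAt_id r).mul (hasDerivAt_derivR (hd hΨr _))).mul
      (hasDerivAt_derivR (hd (contDiff_derivZ hΨz) _))).neg.deriv
  have hH : derivZ (fun q => q.1 * derivR Ψ q * derivR (derivZ Ψ) q + Ψ q * derivZ Ψ q / q.1)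
      (r, z) = (0 * derivR Ψ (r, z) + r * derivZ (derivR Ψ) (r, z)) * derivR (derivZ Ψ) (r, z)
        + r * derivR Ψ (r, z) * derivZ (derivR (derivZ Ψ)) (r, z)
        + (derivZ Ψ (r, z) * derivZ Ψ (r, z) + Ψ (r, z) * derivZ (derivZ Ψ) (r, z)) / r :=
    ((((hasDerivAt_const z r).mul (hasDerivAt_derivZ (hd hΨr _))).mul
      (hasDerivAt_derivZ (hd (contDiff_derivR hΨz) _))).add
      (((hasDerivAt_derivZ (hd hΨ _)).mul (hasDerivAt_derivZ (hd hΨz _))).div_const r)).deriv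
  have hrr : derivR (derivR Ψ) (r, z) = Ψ (r, z) / r ^ 2 - derivR Ψ (r, z) / r
      - derivZ (derivZ Ψ) (r, z) - W (r, z) := by
    simp only [negVecLaplacianφ] at heq
    linear_combination -heq
  rw [hG, hH, hrr, derivZ_derivR (hΨ.of_le (WithTop.coe_le_coe.2 le_top)),
    derivZ_derivR (hΨz.of_le (WithTop.coe_le_coe.2 le_top))]
  field_simp
  ring

theorem integral_sq_grad_derivZ_le (hR : 0 ≤ R) (ha : 0 ≤ a) {W : ℝ × ℝ → ℝ}
    (hΨ : ContDiff ℝ ∞ Ψ) (hW : Continuous W) (hbc : VanishesOnBoundary R a Ψ)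
    (heq : ∀ q ∈ cylStrip R a, negVecLaplacianφ Ψ q = W q) :
    (∫ q, derivR (derivZ Ψ) q ^ 2 + derivZ (derivZ Ψ) q ^ 2 ∂cylMeas R a)
      + (∫ q, (derivZ Ψ q / q.1) ^ 2 ∂cylMeas R a) + ∫ q, derivZ Ψ q ^ 2 ∂cylMeas R a
      ≤ (1 + R ^ 2) * ∫ q, W q ^ 2 ∂cylMeas R a := by
  have hΨr := contDiff_derivR hΨ
  have hΨz := contDiff_derivZ hΨ
  have hΨzr := contDiff_derivR hΨz
  have hΨzz := contDiff_derivZ hΨz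
  obtain ⟨χ, hχc, hχ⟩ := exists_continuous_eq_div_fst (hΨz.of_le (by simp)) hbc.derivZ_axis
  have hχ' : EqOn (fun q => derivZ Ψ q / q.1) χ (cylStrip R a) := fun q hq => hχ q hq.1.1.ne'
  have hgrad : Integrable (fun q => derivR (derivZ Ψ) q ^ 2 + derivZ (derivZ Ψ) q ^ 2)
      (cylMeas R a) :=
    Continuous.integrable_cylMeas (by fun_prop)
  have hdiv : Integrable (fun q => (derivZ Ψ q / q.1) ^ 2) (cylMeas R a) :=
    integrable_cylMeas_of_eqOn (g := fun q => χ q ^ 2) (by fun_prop) fun q hq => by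
      simp only [hχ' hq]
  have hA : Integrable (fun q => derivR (derivZ Ψ) q ^ 2 + derivZ (derivZ Ψ) q ^ 2
      + (derivZ Ψ q / q.1) ^ 2) (cylMeas R a) := hgrad.add hdiv
  have hWzz : Integrable (fun q => -(W q * derivZ (derivZ Ψ) q)) (cylMeas R a) :=
    Continuous.integrable_cylMeas (by fun_prop)
  have hW2 : Integrable (fun q => W q ^ 2 / 2) (cylMeas R a) :=
    Continuous.integrable_cylMeas (by fun_prop)
  have hAW := integral_cylMeas_eq_of_divergence hR ha hA hWzz
    (G := fun q => -(q.1 * derivR Ψ q * derivZ (derivZ Ψ) q))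
    (H := fun q => q.1 * derivR Ψ q * derivR (derivZ Ψ) q + Ψ q * derivZ Ψ q / q.1)
    ((by fun_prop : ContDiff ℝ ∞ _).of_le (by simp))
    (fun r _ => (by dsimp only; fun_prop : ContDiff ℝ ∞ _).of_le (by simp))
    (fun z hz => by simp [hbc.derivZ_derivZ_lateral hz])
    (fun r hr => by simp [hbc.top r (Ioo_subset_Icc_self hr),
      hbc.bottom r (Ioo_subset_Icc_self hr), hbc.derivR_top hr, hbc.derivR_bottom hr])
    fun ⟨r, z⟩ hq => by
      rw [sub_neg_eq_add]
      exact mul_energy_density_derivZ_eq_divergence hΨ hq.1.1.ne' (heq _ hq)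
  have hle := integral_le_two_mul_integral_of_le_half_add hA hWzz hW2 hAW fun q => by
    nlinarith [sq_nonneg (W q + derivZ (derivZ Ψ) q), sq_nonneg (derivR (derivZ Ψ) q),
      sq_nonneg (derivZ Ψ q / q.1)]
  rw [integral_add hgrad hdiv, integral_div] at hle
  have hpoincare := integral_sq_le_sq_mul_integral_sq_div_fst
    (Continuous.integrable_cylMeas (f := fun q => derivZ Ψ q ^ 2) (by fun_prop)) hdiv
  have hX : 0 ≤ ∫ q, derivR (derivZ Ψ) q ^ 2 + derivZ (derivZ Ψ) q ^ 2 ∂cylMeas R a :=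
    integral_nonneg fun q => by positivity
  have hYZ : ∫ q, (derivZ Ψ q / q.1) ^ 2 ∂cylMeas R a ≤ ∫ q, W q ^ 2 ∂cylMeas R a := by linarith
  nlinarith [mul_le_mul_of_nonneg_left hYZ (sq_nonneg R)]

end Energy

section SpaceTime

variable {w : ℝ → ℝ → ℝ → ℝ}

theorem contDiff_sp (hw : ∀ n : ℕ, ContDiff ℝ n fun q : ℝ × ℝ × ℝ => w q.1 q.2.1 q.2.2)
    (t : ℝ) : ContDiff ℝ ∞ (sp w t) :=
  (contDiff_infty.2 hw).comp (contDiff_fst.prodMk (contDiff_snd.prodMk contDiff_const))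

theorem continuous_pdr (hw : ContDiff ℝ 1 fun q : ℝ × ℝ × ℝ => w q.1 q.2.1 q.2.2) :
    Continuous fun q : ℝ × ℝ × ℝ => pdr w q.1 q.2.1 q.2.2 := by
  have h : (fun q : ℝ × ℝ × ℝ => pdr w q.1 q.2.1 q.2.2) =
      fun q => fderiv ℝ (fun q : ℝ × ℝ × ℝ => w q.1 q.2.1 q.2.2) q (1, 0, 0) := by
    funext ⟨r, z, t⟩
    exact ((hw.differentiable one_ne_zero (r, z, t)).hasFDerivAt.comp_hasDerivAt r
      ((hasDerivAt_id r).prodMk ((hasDerivAt_const r z).prodMk (hasDerivAt_const r t)))).deriv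
  rw [h]
  exact (hw.continuous_fderiv one_ne_zero).clm_apply continuous_const

theorem continuous_pdz (hw : ContDiff ℝ 1 fun q : ℝ × ℝ × ℝ => w q.1 q.2.1 q.2.2) :
    Continuous fun q : ℝ × ℝ × ℝ => pdz w q.1 q.2.1 q.2.2 := by
  have h : (fun q : ℝ × ℝ × ℝ => pdz w q.1 q.2.1 q.2.2) =
      fun q => fderiv ℝ (fun q : ℝ × ℝ × ℝ => w q.1 q.2.1 q.2.2) q (0, 1, 0) := by
    funext ⟨r, z, t⟩
    exact ((hw.differentiable one_ne_zero (r, z, t)).hasFDerivAt.comp_hasDerivAt z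
      ((hasDerivAt_const z r).prodMk ((hasDerivAt_id z).prodMk (hasDerivAt_const z t)))).deriv
  rw [h]
  exact (hw.continuous_fderiv one_ne_zero).clm_apply continuous_const

theorem continuous_integral_cylMeas_sq_vorticity {R a : ℝ} {vr vz : ℝ → ℝ → ℝ → ℝ}
    (hvr : ContDiff ℝ 1 fun q : ℝ × ℝ × ℝ => vr q.1 q.2.1 q.2.2)
    (hvz : ContDiff ℝ 1 fun q : ℝ × ℝ × ℝ => vz q.1 q.2.1 q.2.2) :
    Continuous fun t => ∫ q, (pdz vr q.1 q.2 t - pdr vz q.1 q.2 t) ^ 2 ∂cylMeas R a := by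
  have hω := (continuous_pdz hvr).sub (continuous_pdr hvz)
  exact continuous_integral_cylMeas (f := fun t q => (pdz vr q.1 q.2 t - pdr vz q.1 q.2 t) ^ 2)
    ((hω.comp (by fun_prop : Continuous fun p : ℝ × ℝ × ℝ => (p.2.1, p.2.2, p.1))).pow 2)

end SpaceTime

/-- Lemma 2.6, energy estimates for the stream function: for an axially
symmetric smooth divergence-free field `v` with `v_r = 0` on `S₁`, `v_z = 0` on `S₂`, and the
stream function `ψ` solving `−Δψ + ψ/r² = ω_φ` with `ψ = 0` on `S`, there is a constant
`c > 0` depending only on `Ω` such that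
(i)  `|∇ψ|²_{2,Ω} + |ψ/r|²_{2,Ω} ≤ c (|v_r|²_{2,Ω} + |v_z|²_{2,Ω})`, and
(ii) if moreover `ω_φ = 0` on `S`, then for every `t`,
`∫₀^t (|∇ψ,z|² + |(ψ/r),z|² + |ψ,z|²)_{2,Ω} dt' ≤ c ∫₀^t |ω_φ|²_{2,Ω} dt'`. -/
theorem stmt_5 (R a : ℝ) (hR : 0 < R) (ha : 0 < a) :
    ∃ c > 0, ∀ vr vφ vz ψ : ℝ → ℝ → ℝ → ℝ,
      (∀ n : ℕ, ContDiff ℝ n (fun q : ℝ × ℝ × ℝ => vr q.1 q.2.1 q.2.2)) →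
      (∀ n : ℕ, ContDiff ℝ n (fun q : ℝ × ℝ × ℝ => vφ q.1 q.2.1 q.2.2)) →
      (∀ n : ℕ, ContDiff ℝ n (fun q : ℝ × ℝ × ℝ => vz q.1 q.2.1 q.2.2)) →
      (∀ n : ℕ, ContDiff ℝ n (fun q : ℝ × ℝ × ℝ => ψ q.1 q.2.1 q.2.2)) →
      -- divergence-free, in cylindrical coordinates:
      (∀ r z t, (r, z) ∈ cylStrip R a → pdr vr r z t + vr r z t / r + pdz vz r z t = 0) →
      -- axial regularity of the axially symmetric fields:
      (∀ z t, vr 0 z t = 0 ∧ vφ 0 z t = 0 ∧ ψ 0 z t = 0) →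
      -- `v_r = 0` on `S₁` and `v_z = 0` on `S₂`:
      (∀ z ∈ Icc (-a) a, ∀ t, vr R z t = 0) →
      (∀ r ∈ Icc (0:ℝ) R, ∀ t, vz r a t = 0 ∧ vz r (-a) t = 0) →
      -- `−Δψ + ψ/r² = ω_φ` in `Ω`:
      (∀ r z t, (r, z) ∈ cylStrip R a →
        - (pdr (pdr ψ) r z t + pdr ψ r z t / r + pdz (pdz ψ) r z t) + ψ r z t / r ^ 2
          = pdz vr r z t - pdr vz r z t) →
      -- `ψ = 0` on `S`:
      (∀ z ∈ Icc (-a) a, ∀ t, ψ R z t = 0) →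
      (∀ r ∈ Icc (0:ℝ) R, ∀ t, ψ r a t = 0 ∧ ψ r (-a) t = 0) →
      -- (i):
      ((∀ t : ℝ,
        (∫ q, ((pdr ψ q.1 q.2 t) ^ 2 + (pdz ψ q.1 q.2 t) ^ 2) ∂(cylMeas R a))
          + (∫ q, (ψ q.1 q.2 t / q.1) ^ 2 ∂(cylMeas R a))
        ≤ c * ((∫ q, (vr q.1 q.2 t) ^ 2 ∂(cylMeas R a))
              + (∫ q, (vz q.1 q.2 t) ^ 2 ∂(cylMeas R a)))) ∧
      -- (ii):
      (((∀ z ∈ Icc (-a) a, ∀ t, pdz vr R z t - pdr vz R z t = 0) ∧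
        (∀ r ∈ Icc (0:ℝ) R, ∀ t,
          (pdz vr r a t - pdr vz r a t = 0) ∧ (pdz vr r (-a) t - pdr vz r (-a) t = 0))) →
        ∀ t : ℝ,
          (∫ t' in Ioo 0 t,
            ((∫ q, ((pdr (pdz ψ) q.1 q.2 t') ^ 2 + (pdz (pdz ψ) q.1 q.2 t') ^ 2) ∂(cylMeas R a))
              + (∫ q, (pdz ψ q.1 q.2 t' / q.1) ^ 2 ∂(cylMeas R a))
              + (∫ q, (pdz ψ q.1 q.2 t') ^ 2 ∂(cylMeas R a))))
          ≤ c * ∫ t' in Ioo 0 t,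
              ∫ q, (pdz vr q.1 q.2 t' - pdr vz q.1 q.2 t') ^ 2 ∂(cylMeas R a))) := by
  refine ⟨2 + R ^ 2, by positivity, ?_⟩
  intro vr vφ vz ψ hvr _ hvz hψ _ hax _ _ hPDE hψR hψA
  have hbc (t : ℝ) : VanishesOnBoundary R a (sp ψ t) :=
    ⟨fun z => (hax z t).2.2, fun z hz => hψR z hz t, fun r hr => (hψA r hr t).1,
      fun r hr => (hψA r hr t).2⟩
  refine ⟨fun t => ?_, fun _ t => ?_⟩
  · refine (integral_sq_grad_add_sq_div_le hR.le ha.le (contDiff_sp hψ t) (contDiff_sp hvr t)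
      (contDiff_sp hvz t) (hbc t) fun q hq => hPDE q.1 q.2 t hq).trans ?_
    exact mul_le_mul_of_nonneg_right (le_add_of_nonneg_right (sq_nonneg R)) (by positivity)
  · have hslice (t' : ℝ) := integral_sq_grad_derivZ_le hR.le ha.le (contDiff_sp hψ t')
      ((contDiff_derivZ (contDiff_sp hvr t')).continuous.sub
        (contDiff_derivR (contDiff_sp hvz t')).continuous) (hbc t') fun q hq => hPDE q.1 q.2 t' hq
    have hcont := continuous_integral_cylMeas_sq_vorticity (R := R) (a := a)
      ((contDiff_infty.2 hvr).of_le (by simp)) ((contDiff_infty.2 hvz).of_le (by simp))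
    rw [← integral_const_mul]
    refine integral_mono_of_nonneg (ae_of_all _ fun t' => by positivity)
      ((hcont.const_mul _).integrableOn_Icc.mono_set Ioo_subset_Icc_self)
      (ae_of_all _ fun t' =>
        (hslice t').trans (mul_le_mul_of_nonneg_right (by linarith) (by positivity)))
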